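/- Spectral profile lower bound from heat kernel (Coulhon): for any symmetric probability measure φ on a countable group G and any v ≥ 1, Λ_φ(v) ≥ sup_{t>0} (1/(2t))·log(1/(v·h_t^φ(e))), where h_t^φ is the continuous time kernel and Λ_φ is the L² spectral profile. -/

import Mathlib

open scoped BigOperators

/-- A symmetric probability measure on a group. -/
def IsSymProb {G : Type*} [Group G] (φ : G → ℝ) : Prop :=
  (∀ x, 0 ≤ φ x) ∧ (∑' x, φ x) = 1 ∧ ∀ x, φ x⁻¹ = φ x

/-- Convolution of two measures on a group. -/
noncomputable def convolve {G : Type*} [Group G] (μ ν : G → ℝ) : G → ℝ :=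
  fun x => ∑' y : G, μ y * ν (y⁻¹ * x)

open Classical in
/-- Convolution powers `μ^{(n)}` (with `μ^{(0)} = δ_e`). -/
noncomputable def convPow {G : Type*} [Group G] (μ : G → ℝ) : ℕ → G → ℝ
  | 0 => fun x => if x = 1 then 1 else 0
  | n + 1 => convolve μ (convPow μ n)

/-- Continuous-time return probability. -/
noncomputable def contHeat {G : Type*} [Group G] (φ : G → ℝ) (t : ℝ) : ℝ :=
  Real.exp (-t) * ∑' k : ℕ, t ^ k / (Nat.factorial k : ℝ) * convPow φ k 1

/-- The Dirichlet form `E_φ(f,f)`. -/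
noncomputable def dirichletE {G : Type*} [Group G] (φ : G → ℝ) (f : G → ℝ) : ℝ :=
  (1 / 2) * ∑' x : G, ∑' y : G, (f (x * y) - f x) ^ 2 * φ y

/-- The L² spectral profile. -/
noncomputable def specProfile {G : Type*} [Group G] (φ : G → ℝ) (v : ℝ) : ℝ :=
  sInf {E : ℝ | ∃ f : G → ℝ, (Function.support f).Finite ∧
    ((Function.support f).ncard : ℝ) ≤ v ∧ (∑' x, (f x) ^ 2) = 1 ∧ E = dirichletE φ f}

/-!
For `f` supported on `T` with `‖f‖₂ = 1`, let `Q(t) = ⟨f, H_t f⟩`, where `H_t` is convolution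
with the heat kernel `h_t = e^{-t} ∑ tᵏ/k! φ⁽ᵏ⁾`. The kernels `h_t` form a semigroup of symmetric
probability measures, so Cauchy–Schwarz gives `Q(s)² ≤ Q(2s)`. Expanding the series and using
`⟨f, φ * f⟩ = 1 - E(f)` and `|⟨f, φ⁽ᵏ⁾ * f⟩| ≤ 1` gives `Q(s) ≥ 1 - s E(f) - 2s²`; squaring `n`
times from `s = t/2ⁿ` and letting `n → ∞` yields `Q(t) ≥ e^{-t E(f)}`. On the other hand
`h_t = h_{t/2} * h_{t/2}` is maximal at `e`, so `Q(t) ≤ (∑ |f|)² h_t(e) ≤ |T| h_t(e)`. Hence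
`e^{-t E(f)} ≤ v h_t(e)` for every admissible `f`.
-/

theorem hasSum_tsum_comm_of_nonneg {α β : Type*} {F : α → β → ℝ} (hF : ∀ a b, 0 ≤ F a b)
    (hrow : ∀ a, Summable (F a)) (hsum : Summable fun a => ∑' b, F a b) :
    HasSum (fun b => ∑' a, F a b) (∑' a, ∑' b, F a b) := by
  have hu : Summable (Function.uncurry F) :=
    (summable_prod_of_nonneg fun p => hF p.1 p.2).2 ⟨hrow, hsum⟩
  have hswap := hu.prod_symm.hasSum.prod_fiberwise fun b => (hu.prod_symm.prod_factor b).hasSum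
  have hvalue : ∑' p : β × α, Function.uncurry F p.swap = ∑' a, ∑' b, F a b :=
    ((Equiv.prodComm β α).tsum_eq (Function.uncurry F)).trans hu.tsum_prod
  rwa [hvalue] at hswap

theorem tsum_comm_of_nonneg {α β : Type*} {F : α → β → ℝ} (hF : ∀ a b, 0 ≤ F a b)
    (hrow : ∀ a, Summable (F a)) (hsum : Summable fun a => ∑' b, F a b) :
    ∑' a, ∑' b, F a b = ∑' b, ∑' a, F a b :=
  (hasSum_tsum_comm_of_nonneg hF hrow hsum).tsum_eq.symm

theorem Summable.mul_of_nonneg_of_le {α : Type*} {f g : α → ℝ} {C : ℝ} (hf : Summable f)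
    (hf0 : ∀ a, 0 ≤ f a) (hg0 : ∀ a, 0 ≤ g a) (hgC : ∀ a, g a ≤ C) : Summable fun a => f a * g a :=
  (hf.mul_right C).of_nonneg_of_le (fun a => mul_nonneg (hf0 a) (hg0 a))
    fun a => mul_le_mul_of_nonneg_left (hgC a) (hf0 a)

theorem Summable.le_tsum_of_nonneg {α : Type*} {f : α → ℝ} (hf : Summable f) (hf0 : ∀ a, 0 ≤ f a)
    (a : α) : f a ≤ ∑' b, f b :=
  hf.le_tsum a fun b _ => hf0 b

theorem summable_sq_of_nonneg {α : Type*} {f : α → ℝ} (hf0 : ∀ a, 0 ≤ f a) (hf : Summable f) :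
    Summable fun a => f a ^ 2 := by
  simpa only [sq] using hf.mul_of_nonneg_of_le hf0 hf0 (hf.le_tsum_of_nonneg hf0)

theorem Real.hasSum_pow_div_factorial (x : ℝ) :
    HasSum (fun n : ℕ => x ^ n / (Nat.factorial n : ℝ)) (Real.exp x) := by
  rw [Real.exp_eq_exp_ℝ]
  exact NormedSpace.expSeries_div_hasSum_exp x

theorem sub_le_tsum_pow_div_factorial_mul {a : ℕ → ℝ} (ha : ∀ k, |a k| ≤ 1) {s : ℝ} (hs : 0 ≤ s) :
    a 0 + s * a 1 - (Real.exp s - 1 - s) ≤ ∑' k : ℕ, s ^ k / (Nat.factorial k : ℝ) * a k := by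
  set c : ℕ → ℝ := fun k => s ^ k / (Nat.factorial k : ℝ)
  have hc0 : ∀ k, 0 ≤ c k := fun k => by positivity
  have hc := Real.hasSum_pow_div_factorial s
  have hca : Summable fun k => c k * a k := hc.summable.of_norm_bounded fun k => by
    rw [Real.norm_eq_abs, abs_mul, abs_of_nonneg (hc0 k)]
    exact mul_le_of_le_one_right (hc0 k) (ha k)
  have htail : -∑' k, c (k + 2) ≤ ∑' k, c (k + 2) * a (k + 2) := by
    rw [← tsum_neg]
    refine ((summable_nat_add_iff 2).mpr hc.summable).neg.tsum_le_tsum (fun k => ?_)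
      ((summable_nat_add_iff 2).mpr hca)
    nlinarith [(abs_le.mp (ha (k + 2))).1, hc0 (k + 2)]
  have hsplit := hca.sum_add_tsum_nat_add 2
  have hcsplit := hc.summable.sum_add_tsum_nat_add 2
  rw [hc.tsum_eq] at hcsplit
  simp only [Finset.sum_range_succ, Finset.sum_range_zero, c] at hsplit hcsplit
  norm_num at hsplit hcsplit
  linarith

theorem exp_neg_le_one_sub_add_sq {x : ℝ} (hx : 0 ≤ x) : Real.exp (-x) ≤ 1 - x + x ^ 2 := by
  have h := Real.add_one_le_exp x
  rw [← one_div_le_one_div (Real.exp_pos x) (by positivity), one_div, ← Real.exp_neg] at h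
  refine h.trans ?_
  rw [div_le_iff₀ (by positivity)]
  nlinarith [pow_nonneg hx 3]

section Convolution

variable {G : Type*} [Group G]

theorem tsum_inv_mul_left (g : G → ℝ) (w : G) : ∑' y, g (w⁻¹ * y) = ∑' y, g y :=
  (Equiv.mulLeft w⁻¹).tsum_eq g

theorem Summable.comp_inv_mul_left {g : G → ℝ} (hg : Summable g) (w : G) :
    Summable fun y => g (w⁻¹ * y) :=
  (Equiv.mulLeft w⁻¹).summable_iff.mpr hg

theorem tsum_inv_mul_right (g : G → ℝ) (z : G) : ∑' y, g (y⁻¹ * z) = ∑' y, g y :=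
  ((Equiv.inv G).trans (Equiv.mulRight z)).tsum_eq g

theorem Summable.comp_inv_mul_right {g : G → ℝ} (hg : Summable g) (z : G) :
    Summable fun y => g (y⁻¹ * z) :=
  ((Equiv.inv G).trans (Equiv.mulRight z)).summable_iff.mpr hg

theorem convolve_nonneg {μ ν : G → ℝ} (hμ : ∀ x, 0 ≤ μ x) (hν : ∀ x, 0 ≤ ν x) (x : G) :
    0 ≤ convolve μ ν x :=
  tsum_nonneg fun _ => mul_nonneg (hμ _) (hν _)

theorem summable_convolve_summand {μ ν : G → ℝ} (hμ0 : ∀ x, 0 ≤ μ x) (hν0 : ∀ x, 0 ≤ ν x)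
    (hμ : Summable μ) (hν : Summable ν) (x : G) : Summable fun y => μ y * ν (y⁻¹ * x) :=
  hμ.mul_of_nonneg_of_le hμ0 (fun _ => hν0 _) fun _ => hν.le_tsum_of_nonneg hν0 _

theorem HasSum.convolve {μ ν : G → ℝ} {a b : ℝ} (hμ0 : ∀ x, 0 ≤ μ x) (hν0 : ∀ x, 0 ≤ ν x)
    (hμ : HasSum μ a) (hν : HasSum ν b) : HasSum (convolve μ ν) (a * b) := by
  have hrow_eq : ∀ y, ∑' x, μ y * ν (y⁻¹ * x) = μ y * b := fun y => by
    rw [tsum_mul_left, tsum_inv_mul_left ν y, hν.tsum_eq]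
  have hcomm := hasSum_tsum_comm_of_nonneg (F := fun y x => μ y * ν (y⁻¹ * x))
    (fun y x => mul_nonneg (hμ0 y) (hν0 _))
    (fun y => (hν.summable.comp_inv_mul_left y).mul_left (μ y))
    (by simpa only [hrow_eq] using hμ.summable.mul_right b)
  rwa [tsum_congr hrow_eq, tsum_mul_right, hμ.tsum_eq] at hcomm

theorem convolve_assoc {μ ν ρ : G → ℝ} (hμ0 : ∀ x, 0 ≤ μ x) (hν0 : ∀ x, 0 ≤ ν x)
    (hρ0 : ∀ x, 0 ≤ ρ x) (hμ : Summable μ) (hν : Summable ν) (hρ : Summable ρ) :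
    convolve (convolve μ ν) ρ = convolve μ (convolve ν ρ) := by
  funext x
  set F : G → G → ℝ := fun w y => μ w * ν (w⁻¹ * y) * ρ (y⁻¹ * x)
  have hrow_eq : ∀ w, ∑' y, F w y = μ w * convolve ν ρ (w⁻¹ * x) := fun w => by
    rw [convolve, ← tsum_mul_left, ← tsum_inv_mul_left _ w⁻¹]
    exact tsum_congr fun u => by simp only [F, inv_inv, mul_inv_rev, mul_assoc, inv_mul_cancel_left]
  have hrow : ∀ w, Summable (F w) := fun w =>
    ((summable_convolve_summand (fun _ => hν0 _) hρ0 (hν.comp_inv_mul_left w) hρ x).mul_left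
      (μ w)).congr fun y => by simp only [F, mul_assoc]
  have hνρ := hν.hasSum.convolve hν0 hρ0 hρ.hasSum
  have hsum : Summable fun w => ∑' y, F w y := by
    simpa only [hrow_eq] using summable_convolve_summand hμ0 (convolve_nonneg hν0 hρ0) hμ
      hνρ.summable x
  calc convolve (convolve μ ν) ρ x = ∑' y, ∑' w, F w y := by
        simp only [convolve, F, tsum_mul_right]
    _ = ∑' w, ∑' y, F w y :=
        (tsum_comm_of_nonneg (fun w y => mul_nonneg (mul_nonneg (hμ0 _) (hν0 _)) (hρ0 _)) hrow
          hsum).symm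
    _ = convolve μ (convolve ν ρ) x := tsum_congr hrow_eq

theorem convolve_apply_inv {μ ν : G → ℝ} (hμ : ∀ x, μ x⁻¹ = μ x) (hν : ∀ x, ν x⁻¹ = ν x) (x : G) :
    convolve μ ν x⁻¹ = convolve ν μ x := by
  rw [convolve, convolve, ← tsum_inv_mul_left _ x]
  refine tsum_congr fun z => ?_
  rw [← hμ, ← hν, mul_comm]
  simp only [mul_inv_rev, inv_inv, mul_inv_cancel_left]

end Convolution

theorem IsSymProb.hasSum {G : Type*} [Group G] {φ : G → ℝ} (hφ : IsSymProb φ) : HasSum φ 1 := by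
  have hφs : Summable φ := by
    by_contra h
    simpa [tsum_eq_zero_of_not_summable h] using hφ.2.1
  simpa [hφ.2.1] using hφs.hasSum

section ConvPow

variable {G : Type*} [Group G] {φ : G → ℝ}

theorem convolve_convPow_zero (μ : G → ℝ) : convolve μ (convPow φ 0) = μ := by
  funext x
  rw [convolve, tsum_eq_single x fun y hy => by simp [convPow, inv_mul_eq_one, hy]]
  simp [convPow]

theorem convPow_zero_convolve (ν : G → ℝ) : convolve (convPow φ 0) ν = ν := by
  funext x
  rw [convolve, tsum_eq_single 1 fun y hy => by simp [convPow, hy]]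
  simp [convPow]

theorem convPow_one : convPow φ 1 = φ :=
  convolve_convPow_zero φ

theorem convPow_nonneg (hφ0 : ∀ x, 0 ≤ φ x) (k : ℕ) (x : G) : 0 ≤ convPow φ k x := by
  induction k generalizing x with
  | zero => simp only [convPow]; split_ifs <;> norm_num
  | succ k ih => exact convolve_nonneg hφ0 ih x

theorem hasSum_convPow (hφ0 : ∀ x, 0 ≤ φ x) {a : ℝ} (hφ : HasSum φ a) (k : ℕ) :
    HasSum (convPow φ k) (a ^ k) := by
  induction k with
  | zero => classical simpa [convPow] using hasSum_ite_eq (1 : G) (1 : ℝ)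
  | succ k ih =>
    rw [pow_succ']
    exact hφ.convolve hφ0 (convPow_nonneg hφ0 k) ih

theorem convPow_le_one (hφ0 : ∀ x, 0 ≤ φ x) (hφ : HasSum φ 1) (k : ℕ) (x : G) :
    convPow φ k x ≤ 1 := by
  simpa using le_hasSum (hasSum_convPow hφ0 hφ k) x fun y _ => convPow_nonneg hφ0 k y

theorem convPow_add (hφ0 : ∀ x, 0 ≤ φ x) (hφ : Summable φ) (j m : ℕ) :
    convolve (convPow φ j) (convPow φ m) = convPow φ (j + m) := by
  induction j with
  | zero => rw [convPow_zero_convolve, zero_add]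
  | succ j ih =>
    rw [Nat.succ_add, convPow, convPow, convolve_assoc hφ0 (convPow_nonneg hφ0 j)
      (convPow_nonneg hφ0 m) hφ (hasSum_convPow hφ0 hφ.hasSum j).summable
      (hasSum_convPow hφ0 hφ.hasSum m).summable, ih]

theorem convPow_inv (hφ0 : ∀ x, 0 ≤ φ x) (hφ : Summable φ) (hsymm : ∀ x, φ x⁻¹ = φ x)
    (k : ℕ) (x : G) : convPow φ k x⁻¹ = convPow φ k x := by
  induction k generalizing x with
  | zero => by_cases h : x = 1 <;> simp [convPow, h]
  | succ k ih =>
    have hsucc := congrFun (convPow_add hφ0 hφ k 1) x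
    rw [convPow_one] at hsucc
    rw [convPow, convolve_apply_inv hsymm ih, hsucc, convPow]

end ConvPow

section HeatKernel

open Finset

variable {G : Type*} [Group G] {φ : G → ℝ}

noncomputable def heatKernel (φ : G → ℝ) (t : ℝ) (z : G) : ℝ :=
  Real.exp (-t) * ∑' k : ℕ, t ^ k / (Nat.factorial k : ℝ) * convPow φ k z

theorem heatKernel_one (φ : G → ℝ) (t : ℝ) : heatKernel φ t 1 = contHeat φ t :=
  rfl

theorem summable_heatSeries (hφ0 : ∀ x, 0 ≤ φ x) (hφ : HasSum φ 1) {t : ℝ} (ht : 0 ≤ t)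
    (z : G) : Summable fun k : ℕ => t ^ k / (Nat.factorial k : ℝ) * convPow φ k z :=
  (Real.summable_pow_div_factorial t).of_nonneg_of_le
    (fun k => mul_nonneg (by positivity) (convPow_nonneg hφ0 k z))
    fun k => mul_le_of_le_one_right (by positivity) (convPow_le_one hφ0 hφ k z)

theorem heatKernel_nonneg (hφ0 : ∀ x, 0 ≤ φ x) {t : ℝ} (ht : 0 ≤ t) (z : G) :
    0 ≤ heatKernel φ t z :=
  mul_nonneg (Real.exp_nonneg _)
    (tsum_nonneg fun k => mul_nonneg (by positivity) (convPow_nonneg hφ0 k z))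

theorem hasSum_heatKernel (hφ0 : ∀ x, 0 ≤ φ x) (hφ : HasSum φ 1) {t : ℝ} (ht : 0 ≤ t) :
    HasSum (heatKernel φ t) 1 := by
  have hrow : ∀ k : ℕ, HasSum (fun z => t ^ k / (Nat.factorial k : ℝ) * convPow φ k z)
      (t ^ k / (Nat.factorial k : ℝ)) := fun k => by
    simpa using (hasSum_convPow hφ0 hφ k).mul_left (t ^ k / (Nat.factorial k : ℝ))
  have h := hasSum_tsum_comm_of_nonneg
    (fun k z => mul_nonneg (by positivity) (convPow_nonneg hφ0 k z)) (fun k => (hrow k).summable)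
    (by simpa only [(hrow _).tsum_eq] using Real.summable_pow_div_factorial t)
  rw [tsum_congr fun k => (hrow k).tsum_eq, (Real.hasSum_pow_div_factorial t).tsum_eq] at h
  have hmul := h.mul_left (Real.exp (-t))
  rwa [← Real.exp_add, neg_add_cancel, Real.exp_zero] at hmul

theorem heatKernel_inv (hφ0 : ∀ x, 0 ≤ φ x) (hφ : Summable φ) (hsymm : ∀ x, φ x⁻¹ = φ x)
    (t : ℝ) (z : G) : heatKernel φ t z⁻¹ = heatKernel φ t z := by
  simp only [heatKernel, convPow_inv hφ0 hφ hsymm]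

theorem IsSymProb.heatKernel (hφ : IsSymProb φ) {t : ℝ} (ht : 0 ≤ t) :
    IsSymProb (heatKernel φ t) :=
  ⟨heatKernel_nonneg hφ.1 ht, (hasSum_heatKernel hφ.1 hφ.hasSum ht).tsum_eq,
    heatKernel_inv hφ.1 hφ.hasSum.summable hφ.2.2 t⟩

theorem sum_antidiagonal_pow_div_factorial (s u : ℝ) (n : ℕ) :
    ∑ kl ∈ antidiagonal n, s ^ kl.1 / (Nat.factorial kl.1 : ℝ) *
      (u ^ kl.2 / (Nat.factorial kl.2 : ℝ)) = (s + u) ^ n / (Nat.factorial n : ℝ) := by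
  rw [(Commute.all s u).add_pow', Finset.sum_div]
  refine Finset.sum_congr rfl fun kl hkl => ?_
  rw [HasAntidiagonal.mem_antidiagonal] at hkl
  subst hkl
  rw [nsmul_eq_mul, Nat.cast_add_choose]
  field_simp

theorem tsum_sum_antidiagonal_convPow (hφ0 : ∀ x, 0 ≤ φ x) (hφ : HasSum φ 1) (s u : ℝ) (n : ℕ)
    (z : G) :
    ∑' w, ∑ kl ∈ antidiagonal n, s ^ kl.1 / (Nat.factorial kl.1 : ℝ) * convPow φ kl.1 w *
      (u ^ kl.2 / (Nat.factorial kl.2 : ℝ) * convPow φ kl.2 (w⁻¹ * z)) =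
      (s + u) ^ n / (Nat.factorial n : ℝ) * convPow φ n z := by
  have hP := fun k => (hasSum_convPow hφ0 hφ k).summable
  rw [Summable.tsum_finsetSum fun kl _ => ((summable_convolve_summand (convPow_nonneg hφ0 _)
      (convPow_nonneg hφ0 _) (hP kl.1) (hP kl.2) z).mul_left
      (s ^ kl.1 / (Nat.factorial kl.1 : ℝ) * (u ^ kl.2 / (Nat.factorial kl.2 : ℝ)))).congr
      fun w => by ring,
    ← sum_antidiagonal_pow_div_factorial, Finset.sum_mul]
  refine Finset.sum_congr rfl fun kl hkl => ?_
  rw [HasAntidiagonal.mem_antidiagonal] at hkl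
  rw [← hkl, ← convPow_add hφ0 hφ.summable, convolve, ← tsum_mul_left]
  exact tsum_congr fun w => by ring

theorem convolve_heatKernel (hφ0 : ∀ x, 0 ≤ φ x) (hφ : HasSum φ 1) {s u : ℝ} (hs : 0 ≤ s)
    (hu : 0 ≤ u) : convolve (heatKernel φ s) (heatKernel φ u) = heatKernel φ (s + u) := by
  funext z
  set a : ℕ → G → ℝ := fun k w => s ^ k / (Nat.factorial k : ℝ) * convPow φ k w
  set b : ℕ → G → ℝ := fun m w => u ^ m / (Nat.factorial m : ℝ) * convPow φ m w
  set F : G → ℕ → ℝ := fun w n => ∑ kl ∈ antidiagonal n, a kl.1 w * b kl.2 (w⁻¹ * z)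
  have hF0 : ∀ w n, 0 ≤ F w n := fun w n => Finset.sum_nonneg fun kl _ =>
    mul_nonneg (mul_nonneg (by positivity) (convPow_nonneg hφ0 _ _))
      (mul_nonneg (by positivity) (convPow_nonneg hφ0 _ _))
  have hnorm : ∀ {c : ℝ} (w : G), 0 ≤ c → Summable fun k : ℕ =>
      ‖c ^ k / (Nat.factorial k : ℝ) * convPow φ k w‖ := fun w hc =>
    summable_norm_iff.mpr (summable_heatSeries hφ0 hφ hc w)
  have hprod : ∀ w, heatKernel φ s w * heatKernel φ u (w⁻¹ * z) =
      Real.exp (-(s + u)) * ∑' n, F w n := fun w => by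
    rw [heatKernel, heatKernel, mul_mul_mul_comm,
      tsum_mul_tsum_eq_tsum_sum_antidiagonal_of_summable_norm (hnorm w hs) (hnorm _ hu),
      ← Real.exp_add, neg_add]
  have hrow : ∀ w, Summable (F w) := fun w =>
    summable_sum_mul_antidiagonal_of_summable_norm' (f := fun k => a k w)
      (g := fun m => b m (w⁻¹ * z)) (hnorm w hs) (summable_heatSeries hφ0 hφ hs w)
      (hnorm _ hu) (summable_heatSeries hφ0 hφ hu _)
  have hsum : Summable fun w => ∑' n, F w n := by
    refine ((summable_convolve_summand (heatKernel_nonneg hφ0 hs) (heatKernel_nonneg hφ0 hu)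
      (hasSum_heatKernel hφ0 hφ hs).summable (hasSum_heatKernel hφ0 hφ hu).summable z).mul_left
      (Real.exp (s + u))).congr fun w => ?_
    rw [hprod, ← mul_assoc, ← Real.exp_add, add_neg_cancel, Real.exp_zero, one_mul]
  calc convolve (heatKernel φ s) (heatKernel φ u) z
      = ∑' w, Real.exp (-(s + u)) * ∑' n, F w n := tsum_congr hprod
    _ = Real.exp (-(s + u)) * ∑' n, ∑' w, F w n := by
      rw [tsum_mul_left, tsum_comm_of_nonneg hF0 hrow hsum]
    _ = heatKernel φ (s + u) z := by
      simp only [F, a, b, tsum_sum_antidiagonal_convPow hφ0 hφ, heatKernel]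

end HeatKernel

section SymmetricKernel

variable {G : Type*} [Group G] {K : G → ℝ}

theorem convolve_self_inv_mul (hsymm : ∀ x, K x⁻¹ = K x) (u v : G) :
    convolve K K (u⁻¹ * v) = ∑' x, K (x⁻¹ * u) * K (x⁻¹ * v) := by
  rw [convolve, ← tsum_inv_mul_left _ u]
  refine tsum_congr fun x => ?_
  rw [← hsymm (x⁻¹ * u)]
  simp only [inv_inv, mul_inv_rev, mul_assoc, mul_inv_cancel_left]

theorem convolve_self_le_convolve_self_one (hK0 : ∀ x, 0 ≤ K x) (hK : Summable K)
    (hsymm : ∀ x, K x⁻¹ = K x) (z : G) : convolve K K z ≤ convolve K K 1 := by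
  have hK2 := summable_sq_of_nonneg hK0 hK
  have hK2z : Summable fun w => K (w⁻¹ * z) ^ 2 := hK2.comp_inv_mul_right z
  have hone : convolve K K 1 = ∑' w, K w ^ 2 := by
    simp only [convolve, mul_one, hsymm, sq]
  calc convolve K K z ≤ ∑' w, (K w ^ 2 + K (w⁻¹ * z) ^ 2) / 2 :=
        (summable_convolve_summand hK0 hK0 hK hK z).tsum_le_tsum
          (fun w => by nlinarith [sq_nonneg (K w - K (w⁻¹ * z))]) ((hK2.add hK2z).div_const 2)
    _ = convolve K K 1 := by
        rw [tsum_div_const, hK2.tsum_add hK2z, tsum_inv_mul_right (fun w => K w ^ 2), hone]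
        ring

end SymmetricKernel

section KernelForm

variable {G : Type*} [Group G] {K f : G → ℝ} {T : Finset G}

/-- `⟨f, P f⟩` for the Markov operator `P g u = ∑ v, K (u⁻¹ * v) * g v`, when `f` vanishes
off `T`. -/
noncomputable def kernelForm (K f : G → ℝ) (T : Finset G) : ℝ :=
  ∑ u ∈ T, ∑ v ∈ T, f u * f v * K (u⁻¹ * v)

theorem hasSum_kernelForm {ι : Type*} {g : ι → G → ℝ} (hg : ∀ z, HasSum (fun i => g i z) (K z)) :
    HasSum (fun i => kernelForm (g i) f T) (kernelForm K f T) :=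
  hasSum_sum fun u _ => hasSum_sum fun v _ => (hg _).mul_left (f u * f v)

theorem kernelForm_const_mul (c : ℝ) (K : G → ℝ) :
    kernelForm (fun z => c * K z) f T = c * kernelForm K f T := by
  simp only [kernelForm, Finset.mul_sum]
  exact Finset.sum_congr rfl fun _ _ => Finset.sum_congr rfl fun _ _ => by ring

theorem kernelForm_convPow_zero (φ : G → ℝ) : kernelForm (convPow φ 0) f T = ∑ x ∈ T, f x ^ 2 := by
  refine Finset.sum_congr rfl fun u hu => ?_
  rw [Finset.sum_eq_single u (fun v _ hvu => by simp [convPow, inv_mul_eq_one, Ne.symm hvu])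
    (fun hu' => absurd hu hu')]
  simp [convPow, sq]

theorem abs_kernelForm_le (hK0 : ∀ x, 0 ≤ K x) {a : ℝ} (hK : HasSum K a) :
    |kernelForm K f T| ≤ a * ∑ x ∈ T, f x ^ 2 := by
  have hrow : ∀ u, ∑ v ∈ T, K (u⁻¹ * v) ≤ a := fun u => by
    rw [← hK.tsum_eq, ← tsum_inv_mul_left K u]
    exact (hK.summable.comp_inv_mul_left u).sum_le_tsum T fun _ _ => hK0 _
  have hcol : ∀ v, ∑ u ∈ T, K (u⁻¹ * v) ≤ a := fun v => by
    rw [← hK.tsum_eq, ← tsum_inv_mul_right K v]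
    exact (hK.summable.comp_inv_mul_right v).sum_le_tsum T fun _ _ => hK0 _
  calc |kernelForm K f T| ≤ ∑ u ∈ T, ∑ v ∈ T, (f u ^ 2 + f v ^ 2) / 2 * K (u⁻¹ * v) := by
        refine (Finset.abs_sum_le_sum_abs _ _).trans (Finset.sum_le_sum fun u _ => ?_)
        refine (Finset.abs_sum_le_sum_abs _ _).trans (Finset.sum_le_sum fun v _ => ?_)
        rw [abs_mul, abs_of_nonneg (hK0 _), abs_mul]
        refine mul_le_mul_of_nonneg_right ?_ (hK0 _)
        nlinarith [sq_nonneg (|f u| - |f v|), sq_abs (f u), sq_abs (f v)]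
    _ = ∑ u ∈ T, f u ^ 2 / 2 * ∑ v ∈ T, K (u⁻¹ * v) +
          ∑ v ∈ T, f v ^ 2 / 2 * ∑ u ∈ T, K (u⁻¹ * v) := by
        simp only [Finset.mul_sum, add_div, add_mul, Finset.sum_add_distrib]
        rw [Finset.sum_comm (f := fun u v => f v ^ 2 / 2 * K (u⁻¹ * v))]
    _ ≤ ∑ u ∈ T, f u ^ 2 / 2 * a + ∑ v ∈ T, f v ^ 2 / 2 * a := by
        gcongr with u _ v _
        · exact hrow u
        · exact hcol v
    _ = a * ∑ x ∈ T, f x ^ 2 := by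
        rw [← Finset.sum_add_distrib, Finset.mul_sum]
        exact Finset.sum_congr rfl fun x _ => by ring

theorem kernelForm_le_card_mul (hK0 : ∀ x, 0 ≤ K x) (hKmax : ∀ z, K z ≤ K 1) :
    kernelForm K f T ≤ T.card * K 1 * ∑ x ∈ T, f x ^ 2 :=
  calc kernelForm K f T ≤ ∑ u ∈ T, ∑ v ∈ T, |f u| * |f v| * K 1 := by
        refine Finset.sum_le_sum fun u _ => Finset.sum_le_sum fun v _ => ?_
        calc f u * f v * K (u⁻¹ * v) ≤ |f u| * |f v| * K (u⁻¹ * v) := by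
              rw [← abs_mul]
              exact mul_le_mul_of_nonneg_right (le_abs_self _) (hK0 _)
          _ ≤ |f u| * |f v| * K 1 := by gcongr; exact hKmax _
    _ = (∑ x ∈ T, |f x|) ^ 2 * K 1 := by
        rw [sq, Finset.sum_mul_sum, Finset.sum_mul]
        simp only [Finset.sum_mul]
    _ ≤ T.card * (∑ x ∈ T, |f x| ^ 2) * K 1 := by
        gcongr
        · exact (hK0 1)
        · exact sq_sum_le_card_mul_sum_sq
    _ = T.card * K 1 * ∑ x ∈ T, f x ^ 2 := by
        simp only [sq_abs]
        ring

theorem kernelForm_sq_le (hK0 : ∀ x, 0 ≤ K x) (hK : Summable K) (hsymm : ∀ x, K x⁻¹ = K x) :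
    kernelForm K f T ^ 2 ≤ (∑ x ∈ T, f x ^ 2) * kernelForm (convolve K K) f T := by
  set F : G → ℝ := fun x => ∑ v ∈ T, f v * K (x⁻¹ * v)
  have hpair : ∀ u v, Summable fun x => f u * K (x⁻¹ * u) * (f v * K (x⁻¹ * v)) := fun u v =>
    (((hK.comp_inv_mul_right u).mul_of_nonneg_of_le (g := fun x => K (x⁻¹ * v))
      (fun _ => hK0 _) (fun _ => hK0 _) fun _ => hK.le_tsum_of_nonneg hK0 _).mul_left
      (f u * f v)).congr fun x => by ring
  have hF2 : ∀ x, F x ^ 2 = ∑ u ∈ T, ∑ v ∈ T, f u * K (x⁻¹ * u) * (f v * K (x⁻¹ * v)) :=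
    fun x => by rw [sq, Finset.sum_mul_sum]
  have hF2sum : Summable fun x => F x ^ 2 := by
    simpa only [hF2] using summable_sum fun u _ => summable_sum fun v _ => hpair u v
  have hF2tsum : ∑' x, F x ^ 2 = kernelForm (convolve K K) f T := by
    simp only [hF2]
    rw [Summable.tsum_finsetSum fun u _ => summable_sum fun v _ => hpair u v]
    refine Finset.sum_congr rfl fun u _ => ?_
    rw [Summable.tsum_finsetSum fun v _ => hpair u v]
    refine Finset.sum_congr rfl fun v _ => ?_
    rw [convolve_self_inv_mul hsymm, ← tsum_mul_left]
    exact tsum_congr fun x => by ring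
  calc kernelForm K f T ^ 2 = (∑ u ∈ T, f u * F u) ^ 2 := by
        simp only [kernelForm, F, Finset.mul_sum, mul_assoc]
    _ ≤ (∑ x ∈ T, f x ^ 2) * ∑ x ∈ T, F x ^ 2 := Finset.sum_mul_sq_le_sq_mul_sq T f F
    _ ≤ (∑ x ∈ T, f x ^ 2) * kernelForm (convolve K K) f T := by
        rw [← hF2tsum]
        exact mul_le_mul_of_nonneg_left (hF2sum.sum_le_tsum T fun _ _ => sq_nonneg _)
          (Finset.sum_nonneg fun _ _ => sq_nonneg _)

end KernelForm

section Dirichlet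

variable {G : Type*} [Group G] {φ f : G → ℝ} {T : Finset G}

theorem dirichletE_nonneg (hφ0 : ∀ x, 0 ≤ φ x) (f : G → ℝ) : 0 ≤ dirichletE φ f :=
  mul_nonneg (by norm_num)
    (tsum_nonneg fun _ => tsum_nonneg fun y => mul_nonneg (sq_nonneg _) (hφ0 y))

theorem hasSum_tsum_comp_mul_mul (hφ0 : ∀ x, 0 ≤ φ x) (hφ : HasSum φ 1) {g : G → ℝ} {S : ℝ}
    (hg0 : ∀ x, 0 ≤ g x) (hg : HasSum g S) : HasSum (fun x => ∑' y, g (x * y) * φ y) S := by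
  have hφinv : HasSum (fun y => φ y⁻¹) 1 := (Equiv.inv G).hasSum_iff.mpr hφ
  have h := hg.convolve hg0 (fun _ => hφ0 _) hφinv
  rw [mul_one] at h
  refine h.congr_fun fun x => ?_
  rw [convolve, ← tsum_inv_mul_left (fun y => g y * φ (y⁻¹ * x)⁻¹) x⁻¹]
  simp only [inv_inv, mul_inv_rev, inv_mul_cancel_left]

theorem tsum_comp_mul_mul_eq_sum (hT : ∀ x ∉ T, f x = 0) (x : G) :
    ∑' y, f (x * y) * φ y = ∑ v ∈ T, f v * φ (x⁻¹ * v) := by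
  rw [← tsum_inv_mul_left _ x]
  simp only [mul_inv_cancel_left]
  exact tsum_eq_sum fun v hv => by rw [hT v hv, zero_mul]

theorem summable_comp_mul_mul (hT : ∀ x ∉ T, f x = 0) (g : G → ℝ) (x : G) :
    Summable fun y => f (x * y) * g y := by
  classical
  exact summable_of_ne_finset_zero (s := T.image (x⁻¹ * ·)) fun y hy => by
    rw [hT (x * y) fun hxy => hy (Finset.mem_image.mpr ⟨x * y, hxy, inv_mul_cancel_left x y⟩),
      zero_mul]

theorem dirichletE_eq_sub_kernelForm (hφ0 : ∀ x, 0 ≤ φ x) (hφ : HasSum φ 1)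
    (hT : ∀ x ∉ T, f x = 0) : dirichletE φ f = ∑ x ∈ T, f x ^ 2 - kernelForm φ f T := by
  have hf2 : HasSum (fun x => f x ^ 2) (∑ x ∈ T, f x ^ 2) :=
    hasSum_sum_of_ne_finset_zero fun x hx => by rw [hT x hx, zero_pow two_ne_zero]
  have hcross : HasSum (fun x => f x * ∑' y, f (x * y) * φ y) (kernelForm φ f T) := by
    have hvalue : kernelForm φ f T = ∑ x ∈ T, f x * ∑' y, f (x * y) * φ y := by
      simp only [kernelForm, tsum_comp_mul_mul_eq_sum hT, Finset.mul_sum, mul_assoc]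
    rw [hvalue]
    exact hasSum_sum_of_ne_finset_zero fun x hx => by rw [hT x hx, zero_mul]
  have hrow : ∀ x, ∑' y, (f (x * y) - f x) ^ 2 * φ y =
      ∑' y, f (x * y) ^ 2 * φ y - 2 * (f x * ∑' y, f (x * y) * φ y) + f x ^ 2 := fun x => by
    have h := (((summable_comp_mul_mul hT (fun y => f (x * y) * φ y) x).hasSum.sub
      ((summable_comp_mul_mul hT φ x).hasSum.mul_left (2 * f x))).add (hφ.mul_left (f x ^ 2)))
    rw [mul_one] at h
    refine (h.congr_fun fun y => by ring).tsum_eq.trans ?_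
    simp only [sq, mul_assoc]
  have hsum := ((hasSum_tsum_comp_mul_mul hφ0 hφ (fun _ => sq_nonneg _) hf2).sub
    (hcross.mul_left 2)).add hf2
  rw [dirichletE, tsum_congr hrow, hsum.tsum_eq]
  ring

end Dirichlet

section HeatForm

variable {G : Type*} [Group G] {φ f : G → ℝ} {T : Finset G}

theorem heatKernel_le_heatKernel_one (hφ : IsSymProb φ) {t : ℝ} (ht : 0 ≤ t) (z : G) :
    heatKernel φ t z ≤ heatKernel φ t 1 := by
  have ht2 : 0 ≤ t / 2 := by positivity
  have hK := hφ.heatKernel ht2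
  have h := convolve_self_le_convolve_self_one hK.1 hK.hasSum.summable hK.2.2 z
  rwa [convolve_heatKernel hφ.1 hφ.hasSum ht2 ht2, add_halves] at h

theorem one_sub_le_kernelForm_heatKernel (hφ0 : ∀ x, 0 ≤ φ x) (hφ : HasSum φ 1)
    (hT : ∀ x ∉ T, f x = 0) (hf : ∑ x ∈ T, f x ^ 2 = 1) {s : ℝ} (hs : 0 ≤ s) :
    1 - s * dirichletE φ f - 2 * s ^ 2 ≤ kernelForm (heatKernel φ s) f T := by
  set E := dirichletE φ f
  set a : ℕ → ℝ := fun k => kernelForm (convPow φ k) f T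
  have ha : ∀ k, |a k| ≤ 1 := fun k => by
    simpa [hf] using
      abs_kernelForm_le (f := f) (T := T) (convPow_nonneg hφ0 k) (hasSum_convPow hφ0 hφ k)
  have ha0 : a 0 = 1 := (kernelForm_convPow_zero φ).trans hf
  have ha1 : a 1 = 1 - E := by
    simp only [a, E, dirichletE_eq_sub_kernelForm hφ0 hφ hT, hf, convPow_one]
    ring
  have hE2 : E ≤ 2 := by linarith [(abs_le.mp (ha 1)).1]
  have hE0 : 0 ≤ E := dirichletE_nonneg hφ0 f
  have hseries : kernelForm (heatKernel φ s) f T =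
      Real.exp (-s) * ∑' k : ℕ, s ^ k / (Nat.factorial k : ℝ) * a k := by
    have hK : heatKernel φ s = fun z =>
        Real.exp (-s) * ∑' k : ℕ, s ^ k / (Nat.factorial k : ℝ) * convPow φ k z := rfl
    rw [hK, kernelForm_const_mul, ← (hasSum_kernelForm fun z =>
      (summable_heatSeries hφ0 hφ hs z).hasSum).tsum_eq]
    simp only [a, kernelForm_const_mul]
  have hlow := sub_le_tsum_pow_div_factorial_mul ha hs
  rw [ha0, ha1] at hlow
  have hexp : 1 - s ≤ Real.exp (-s) := by linarith [Real.add_one_le_exp (-s)]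
  calc 1 - s * E - 2 * s ^ 2 ≤ (1 - s) * (2 + 2 * s - s * E) - 1 := by nlinarith
    _ ≤ Real.exp (-s) * (2 + 2 * s - s * E) - 1 := by gcongr; nlinarith
    _ = Real.exp (-s) * (1 + s * (1 - E) - (Real.exp s - 1 - s)) := by
        have hinv : Real.exp (-s) * Real.exp s = 1 := by
          rw [← Real.exp_add, neg_add_cancel, Real.exp_zero]
        linear_combination hinv
    _ ≤ kernelForm (heatKernel φ s) f T := by
        rw [hseries]
        exact mul_le_mul_of_nonneg_left hlow (Real.exp_nonneg _)

theorem kernelForm_heatKernel_pow_le (hφ : IsSymProb φ) (hf : ∑ x ∈ T, f x ^ 2 = 1) {t : ℝ}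
    (ht : 0 ≤ t) (n : ℕ) :
    kernelForm (heatKernel φ (t / 2 ^ n)) f T ^ 2 ^ n ≤ kernelForm (heatKernel φ t) f T := by
  induction n with
  | zero => simp
  | succ n ih =>
    have hs : 0 ≤ t / 2 ^ (n + 1) := by positivity
    have hK := hφ.heatKernel hs
    have hsq := kernelForm_sq_le (f := f) (T := T) hK.1 hK.hasSum.summable hK.2.2
    rw [hf, one_mul, convolve_heatKernel hφ.1 hφ.hasSum hs hs,
      show t / 2 ^ (n + 1) + t / 2 ^ (n + 1) = t / 2 ^ n by field_simp; ring] at hsq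
    calc kernelForm (heatKernel φ (t / 2 ^ (n + 1))) f T ^ 2 ^ (n + 1)
        = (kernelForm (heatKernel φ (t / 2 ^ (n + 1))) f T ^ 2) ^ 2 ^ n := by
          rw [← pow_mul, ← pow_succ']
      _ ≤ kernelForm (heatKernel φ (t / 2 ^ n)) f T ^ 2 ^ n :=
          pow_le_pow_left₀ (sq_nonneg _) hsq _
      _ ≤ kernelForm (heatKernel φ t) f T := ih

end HeatForm

section Profile

variable {G : Type*} [Group G] {φ f : G → ℝ} {T : Finset G}

open Filter Topology in
theorem exp_neg_mul_dirichletE_le_kernelForm (hφ : IsSymProb φ) (hT : ∀ x ∉ T, f x = 0)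
    (hf : ∑ x ∈ T, f x ^ 2 = 1) {t : ℝ} (ht : 0 ≤ t) :
    Real.exp (-(t * dirichletE φ f)) ≤ kernelForm (heatKernel φ t) f T := by
  set E := dirichletE φ f
  have hE0 : 0 ≤ E := dirichletE_nonneg hφ.1 f
  have hε : ∀ ε > 0, Real.exp (-(t * (E + ε))) ≤ kernelForm (heatKernel φ t) f T := by
    intro ε hε
    -- `s = t / 2ⁿ` is so small that `e^{-s (E + ε)} ≤ 1 - s E - 2 s²`; squaring `n` times
    -- carries this lower bound from time `s` to time `t`.
    obtain ⟨n, hn⟩ := pow_unbounded_of_one_lt (t * (2 + (E + ε) ^ 2) / ε) one_lt_two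
    set s := t / 2 ^ n
    have hs : 0 ≤ s := by positivity
    have hsε : s * (2 + (E + ε) ^ 2) ≤ ε := by
      rw [div_lt_iff₀ hε] at hn
      rw [div_mul_eq_mul_div, div_le_iff₀ (by positivity)]
      linarith
    have hstep : Real.exp (-(s * (E + ε))) ≤ kernelForm (heatKernel φ s) f T :=
      calc Real.exp (-(s * (E + ε))) ≤ 1 - s * (E + ε) + (s * (E + ε)) ^ 2 :=
            exp_neg_le_one_sub_add_sq (by positivity)
        _ ≤ 1 - s * E - 2 * s ^ 2 := by nlinarith [mul_le_mul_of_nonneg_left hsε hs]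
        _ ≤ kernelForm (heatKernel φ s) f T :=
            one_sub_le_kernelForm_heatKernel hφ.1 hφ.hasSum hT hf hs
    calc Real.exp (-(t * (E + ε))) = Real.exp (-(s * (E + ε))) ^ 2 ^ n := by
          rw [← Real.exp_nat_mul]
          congr 1
          simp only [s]
          push_cast
          field_simp
      _ ≤ kernelForm (heatKernel φ s) f T ^ 2 ^ n :=
          pow_le_pow_left₀ (Real.exp_nonneg _) hstep _
      _ ≤ kernelForm (heatKernel φ t) f T := kernelForm_heatKernel_pow_le hφ hf ht n
  have hlim : Tendsto (fun ε => Real.exp (-(t * (E + ε)))) (𝓝[>] 0) (𝓝 (Real.exp (-(t * E)))) := by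
    have hcont : Continuous fun ε => Real.exp (-(t * (E + ε))) := by fun_prop
    simpa using (hcont.tendsto 0).mono_left nhdsWithin_le_nhds
  exact le_of_tendsto hlim (eventually_nhdsWithin_of_forall hε)

theorem exp_neg_mul_dirichletE_le_card_mul_contHeat (hφ : IsSymProb φ) (hT : ∀ x ∉ T, f x = 0)
    (hf : ∑' x, f x ^ 2 = 1) {t : ℝ} (ht : 0 ≤ t) :
    Real.exp (-(t * dirichletE φ f)) ≤ T.card * contHeat φ t := by
  have hfT : ∑ x ∈ T, f x ^ 2 = 1 := by
    rwa [tsum_eq_sum fun x hx => by rw [hT x hx, zero_pow two_ne_zero]] at hf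
  calc Real.exp (-(t * dirichletE φ f)) ≤ kernelForm (heatKernel φ t) f T :=
        exp_neg_mul_dirichletE_le_kernelForm hφ hT hfT ht
    _ ≤ T.card * heatKernel φ t 1 * ∑ x ∈ T, f x ^ 2 :=
        kernelForm_le_card_mul (heatKernel_nonneg hφ.1 ht) (heatKernel_le_heatKernel_one hφ ht)
    _ = T.card * contHeat φ t := by rw [hfT, mul_one, heatKernel_one]

theorem le_specProfile {v c : ℝ} (hv : 1 ≤ v)
    (h : ∀ f : G → ℝ, (Function.support f).Finite → ((Function.support f).ncard : ℝ) ≤ v →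
      ∑' x, f x ^ 2 = 1 → c ≤ dirichletE φ f) :
    c ≤ specProfile φ v := by
  classical
  have hsupp : Function.support (Pi.single (1 : G) (1 : ℝ)) = {1} :=
    Pi.support_single_of_ne one_ne_zero
  refine le_csInf ⟨_, Pi.single 1 1, ?_, ?_, ?_, rfl⟩ ?_
  · simp [hsupp]
  · simpa [hsupp] using hv
  · rw [tsum_eq_single 1 fun x hx => by simp [hx]]
    simp
  · rintro _ ⟨f, hfin, hcard, hf, rfl⟩
    exact h f hfin hcard hf

end Profile

theorem specProfile_lower_from_heat_general {G : Type*} [Group G]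
    (φ : G → ℝ) (hφ : IsSymProb φ) (v : ℝ) (hv : 1 ≤ v) :
    ∀ t > (0:ℝ), (1 / (2 * t)) * Real.log (1 / (v * contHeat φ t)) ≤ specProfile φ v := by
  intro t ht
  refine le_specProfile hv fun f hfin hcard hf => ?_
  have hT : ∀ x ∉ hfin.toFinset, f x = 0 := fun x hx =>
    Function.notMem_support.mp fun hx' => hx (hfin.mem_toFinset.mpr hx')
  have hcardT : (hfin.toFinset.card : ℝ) ≤ v := by rwa [Set.ncard_eq_toFinset_card _ hfin] at hcard
  have hheat : Real.exp (-(t * dirichletE φ f)) ≤ v * contHeat φ t :=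
    (exp_neg_mul_dirichletE_le_card_mul_contHeat hφ hT hf ht.le).trans
      (mul_le_mul_of_nonneg_right hcardT (heatKernel_nonneg hφ.1 ht.le 1))
  have hlog : -(t * dirichletE φ f) ≤ Real.log (v * contHeat φ t) := by
    rw [← Real.log_exp (-(t * dirichletE φ f))]
    exact Real.log_le_log (Real.exp_pos _) hheat
  have hE := dirichletE_nonneg hφ.1 f
  calc 1 / (2 * t) * Real.log (1 / (v * contHeat φ t))
      = -Real.log (v * contHeat φ t) / (2 * t) := by rw [one_div (v * _), Real.log_inv]; ring
    _ ≤ t * dirichletE φ f / (2 * t) := by gcongr; linarith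
    _ ≤ dirichletE φ f := by
        rw [div_le_iff₀ (by positivity)]
        nlinarith

/-- Spectral profile lower bound from the heat kernel (Coulhon): for any `v ≥ 1`,
`Λ_φ(v) ≥ sup_{t>0} (1/(2t))·log(1/(v·h_t^φ(e)))`. -/
theorem specProfile_lower_from_heat {G : Type*} [Group G] [Countable G]
    (φ : G → ℝ) (hφ : IsSymProb φ) (v : ℝ) (hv : 1 ≤ v) :
    ∀ t > (0:ℝ), (1 / (2 * t)) * Real.log (1 / (v * contHeat φ t)) ≤ specProfile φ v :=
  specProfile_lower_from_heat_general φ hφ v hv
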